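/- arXiv:2403.12815 — 5 statements merged into one kernel-verified Lean document; each statement's English description precedes it below -/
import Mathlib

section
/- Under μ conditioned on the ellipsoidal event, every coordinate has conditional mean zero: for every a > 0, every η : Fin d → ℝ with all η_j ≥ 0, and every index i, ∫ z_i dμ[|S(η,a)] = 0. (This is the key symmetry step in the proof of Theorem 1, showing all covariate mean differences remain centered at zero after Quadratic Form Rerandomization.) -/
open MeasureTheory ProbabilityTheory

/-!
The standard Gaussian is symmetric, hence so is the product measure, and the ellipsoid
`{z | ∑ j, η j * (z j) ^ 2 ≤ a}` is invariant under `z ↦ -z`. Conditioning a symmetric measure on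
a symmetric event keeps it symmetric, and an odd function such as `z ↦ z i` integrates to zero
against a symmetric measure.
-/

instance gaussianReal_isNegInvariant (v : NNReal) : (gaussianReal 0 v).IsNegInvariant :=
  ⟨gaussianReal_map_neg.trans (by rw [neg_zero])⟩

namespace MeasureTheory

variable {G : Type*} [MeasurableSpace G] [AddGroup G] [MeasurableNeg G]

theorem integral_eq_zero_of_odd {E : Type*} [NormedAddCommGroup E] [NormedSpace ℝ E]
    (μ : Measure G) [μ.IsNegInvariant] {f : G → E} (hf : f.Odd) :
    ∫ x, f x ∂μ = 0 := by
  have h : -∫ x, f x ∂μ = ∫ x, f x ∂μ := by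
    rw [← integral_neg, ← integral_neg_eq_self f μ, funext hf]
  have h_two_smul : (2 : ℝ) • ∫ x, f x ∂μ = 0 := by
    rw [two_smul]
    nth_rw 1 [← h]
    exact neg_add_cancel _
  simpa using h_two_smul

theorem isNegInvariant_cond (μ : Measure G) [μ.IsNegInvariant] {s : Set G} (hs : -s = s) :
    (μ[|s]).IsNegInvariant := by
  have h_preimage : Neg.neg ⁻¹' s = s := hs
  refine ⟨?_⟩
  rw [Measure.neg_def, ProbabilityTheory.cond, Measure.map_smul]
  congr 1
  calc (μ.restrict s).map Neg.neg = (μ.restrict (Neg.neg ⁻¹' s)).map Neg.neg := by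
        rw [h_preimage]
    _ = (μ.map Neg.neg).restrict s :=
        ((MeasurableEquiv.neg G).measurableEmbedding.restrict_map μ s).symm
    _ = μ.restrict s := by rw [Measure.map_neg_eq_self]

end MeasureTheory

theorem conditional_mean_zero_general (d : ℕ) (a : ℝ)
    (η : Fin d → ℝ) (i : Fin d) :
    ∫ z, z i ∂((Measure.pi fun _ : Fin d => gaussianReal 0 1)[|{z | ∑ j, η j * (z j) ^ 2 ≤ a}])
      = 0 := by
  have h_symm : -{z : Fin d → ℝ | ∑ j, η j * (z j) ^ 2 ≤ a} = {z | ∑ j, η j * (z j) ^ 2 ≤ a} := by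
    ext z
    simp
  have := isNegInvariant_cond (Measure.pi fun _ : Fin d => gaussianReal 0 1) h_symm
  exact integral_eq_zero_of_odd _ fun z => rfl

/-- Under the product of `d` standard Gaussians conditioned on the ellipsoidal event
`{z | ∑ j, η j * (z j)^2 ≤ a}`, every coordinate has conditional mean zero. -/
theorem conditional_mean_zero (d : ℕ) (hd : 1 ≤ d) (a : ℝ) (ha : 0 < a)
    (η : Fin d → ℝ) (hη : ∀ j, 0 ≤ η j) (i : Fin d) :
    ∫ z, z i ∂((Measure.pi fun _ : Fin d => gaussianReal 0 1)[|{z | ∑ j, η j * (z j) ^ 2 ≤ a}])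
      = 0 :=
  conditional_mean_zero_general d a η i
end

section
/- Under μ conditioned on the ellipsoidal event, distinct coordinates are conditionally uncorrelated: for every a > 0, every η : Fin d → ℝ with all η_j ≥ 0, and all indices ℓ ≠ m, ∫ z_ℓ * z_m dμ[|S(η,a)] = 0. Consequently the conditional covariance matrix of the coordinates given S(η,a) is diagonal. (Off-diagonal step in the proof of Theorem 1.) -/
open MeasureTheory ProbabilityTheory

lemma gauss_neg' : (gaussianReal 0 1).map Neg.neg = gaussianReal 0 1 := by
  have := gaussianReal_map_const_mul (μ := 0) (v := 1) (-1)
  simp only [neg_one_mul, mul_zero] at this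
  convert this using 2
  ext; norm_num

/-- Under the product of `d` standard Gaussians conditioned on the ellipsoidal event
`{z | ∑ j, η j * (z j)^2 ≤ a}`, distinct coordinates are conditionally uncorrelated. -/
theorem conditional_cross_moment_zero (d : ℕ) (hd : 1 ≤ d) (a : ℝ) (ha : 0 < a)
    (η : Fin d → ℝ) (hη : ∀ j, 0 ≤ η j) (ℓ m : Fin d) (hlm : ℓ ≠ m) :
    ∫ z, z ℓ * z m
        ∂((Measure.pi fun _ : Fin d => gaussianReal 0 1)[|{z | ∑ j, η j * (z j) ^ 2 ≤ a}])
      = 0 := by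
  set μ : Measure (Fin d → ℝ) := Measure.pi fun _ : Fin d => gaussianReal 0 1 with hμ
  set S : Set (Fin d → ℝ) := {z | ∑ j, η j * (z j) ^ 2 ≤ a} with hSdef
  have hSmeas : MeasurableSet S :=
    measurableSet_le (by fun_prop) measurable_const
  set e : (Fin d → ℝ) ≃ᵐ (Fin d → ℝ) := MeasurableEquiv.piCongrRight
    (fun i : Fin d => if i = ℓ then (Homeomorph.neg ℝ).toMeasurableEquiv
      else MeasurableEquiv.refl ℝ) with he
  have happ : ∀ (z : Fin d → ℝ) (i : Fin d), e z i = if i = ℓ then -(z i) else z i := by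
    intro z i
    simp only [he, MeasurableEquiv.piCongrRight, MeasurableEquiv.coe_mk, Pi.map_apply]
    split <;> simp_all <;> rfl
  have hpres : MeasurePreserving e μ μ := by
    have h : ∀ i : Fin d, MeasurePreserving
        (⇑(if i = ℓ then (Homeomorph.neg ℝ).toMeasurableEquiv else MeasurableEquiv.refl ℝ))
        (gaussianReal 0 1) (gaussianReal 0 1) := by
      intro i
      split
      · exact ⟨(Homeomorph.neg ℝ).toMeasurableEquiv.measurable, gauss_neg'⟩
      · exact MeasurePreserving.id _
    exact measurePreserving_pi _ _ h
  have hSinv : e ⁻¹' S = S := by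
    ext z
    simp only [Set.mem_preimage, hSdef, Set.mem_setOf_eq]
    congr! 2 with j
    rw [happ]
    split <;> simp
  have hcond : MeasurePreserving e (μ[|S]) (μ[|S]) := by
    refine ⟨e.measurable, ?_⟩
    ext t ht
    rw [Measure.map_apply e.measurable ht, cond_apply hSmeas, cond_apply hSmeas]
    congr 1
    have : S ∩ e ⁻¹' t = e ⁻¹' (S ∩ t) := by rw [Set.preimage_inter, hSinv]
    rw [this, hpres.measure_preimage (hSmeas.inter ht).nullMeasurableSet]
  have key : ∫ z, z ℓ * z m ∂(μ[|S]) = ∫ z, e z ℓ * e z m ∂(μ[|S]) :=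
    (hcond.integral_comp e.measurableEmbedding fun z => z ℓ * z m).symm
  have hneg : ∀ z : Fin d → ℝ, e z ℓ * e z m = -(z ℓ * z m) := by
    intro z
    rw [happ, happ, if_pos rfl, if_neg (Ne.symm hlm)]
    ring
  simp only [hneg, integral_neg] at key
  linarith
end

section
/- Theorem 1 (covariance under Quadratic Form Rerandomization, Gaussian limit form): Let T = {w : (Σ^{1/2} w)ᵀ * A * (Σ^{1/2} w) ≤ a} for a > 0, which has positive μ-measure. Then for all indices i, k, ∫ (Σ^{1/2}.mulVec w)_i * (Σ^{1/2}.mulVec w)_k dμ[|T] = (Σ^{1/2} * Ω * diagonal (fun j => ν_j(η,a)) * Ωᵀ * Σ^{1/2})_{i k}. In words: if Z ~ N(0, Σ), the covariance matrix of Z conditional on the quadratic-form balance event ZᵀAZ ≤ a equals Σ^{1/2} Ω diag(ν_{1,η},…,ν_{d,η}) Ωᵀ Σ^{1/2}, where ν_{j,η} = E[Z_j² | ∑_j η_j Z_j² ≤ a] for i.i.d. standard normals. -/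
open MeasureTheory ProbabilityTheory Matrix
open scoped ENNReal NNReal

namespace QFRaux

lemma lmarginal_prod {ι : Type*} [Fintype ι] [DecidableEq ι]
    (μ : ι → Measure ℝ) [∀ i, SigmaFinite (μ i)]
    (f : ι → ℝ → ℝ≥0∞) (hf : ∀ i, Measurable (f i)) (s : Finset ι) (x : ι → ℝ) :
    (∫⋯∫⁻_s, (fun z => ∏ i, f i (z i)) ∂μ) x
      = (∏ i ∈ s, ∫⁻ t, f i t ∂μ i) * ∏ i ∈ sᶜ, f i (x i) := by
  have hF : Measurable fun z : ι → ℝ => ∏ i, f i (z i) :=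
    Finset.measurable_prod _ fun i _ => (hf i).comp (measurable_pi_apply i)
  induction s using Finset.induction generalizing x with
  | empty => simp
  | @insert j s hj ih =>
      rw [MeasureTheory.lmarginal_insert _ hF hj]
      have hupd : ∀ (t : ℝ), (∫⋯∫⁻_s, (fun z => ∏ i, f i (z i)) ∂μ) (Function.update x j t)
          = (∏ i ∈ s, ∫⁻ t, f i t ∂μ i) *
            (f j t * ∏ i ∈ sᶜ.erase j, f i (x i)) := by
        intro t
        rw [ih]
        congr 1
        have hjc : j ∈ sᶜ := Finset.mem_compl.2 hj
        rw [← Finset.mul_prod_erase sᶜ _ hjc, Function.update_self]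
        congr 1
        exact Finset.prod_congr rfl fun i hi =>
          congrArg _ (Function.update_of_ne (Finset.mem_erase.1 hi).1 _ _)
      simp_rw [hupd]
      rw [lintegral_const_mul _ ((hf j).mul_const _),
        lintegral_mul_const _ (hf j), Finset.prod_insert hj, Finset.compl_insert]
      ring

lemma lintegral_pi_prod {ι : Type*} [Fintype ι] [DecidableEq ι]
    (μ : ι → Measure ℝ) [∀ i, SigmaFinite (μ i)]
    (f : ι → ℝ → ℝ≥0∞) (hf : ∀ i, Measurable (f i)) :
    ∫⁻ z, ∏ i, f i (z i) ∂Measure.pi μ = ∏ i, ∫⁻ t, f i t ∂μ i := by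
  rw [MeasureTheory.lintegral_eq_lmarginal_univ (fun _ => (0:ℝ)),
    lmarginal_prod μ f hf Finset.univ]
  simp

lemma pi_gaussian_eq_withDensity (d : ℕ) :
    (Measure.pi fun _ : Fin d => gaussianReal 0 1)
      = (volume : Measure (Fin d → ℝ)).withDensity
          (fun z => ∏ j, gaussianPDF 0 1 (z j)) := by
  refine Measure.pi_eq fun s hs => ?_
  have hbox : MeasurableSet (Set.univ.pi s) := MeasurableSet.univ_pi hs
  rw [withDensity_apply _ hbox, ← lintegral_indicator hbox]
  have hind : ∀ z : Fin d → ℝ,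
      (Set.univ.pi s).indicator (fun z => ∏ j, gaussianPDF 0 1 (z j)) z
        = ∏ j, (s j).indicator (gaussianPDF 0 1) (z j) := by
    intro z
    by_cases hz : z ∈ Set.univ.pi s
    · rw [Set.indicator_of_mem hz]
      exact Finset.prod_congr rfl fun j _ =>
        (Set.indicator_of_mem (hz j (Set.mem_univ j)) _).symm
    · rw [Set.indicator_of_notMem hz]
      obtain ⟨j, hj⟩ := not_forall.1 (by simpa [Set.mem_univ_pi] using hz)
      exact (Finset.prod_eq_zero (Finset.mem_univ j)
        (Set.indicator_of_notMem hj _)).symm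
  simp_rw [hind]
  rw [MeasureTheory.volume_pi,
    lintegral_pi_prod _ _ (fun j => (measurable_gaussianPDF 0 1).indicator (hs j))]
  refine Finset.prod_congr rfl fun j _ => ?_
  rw [lintegral_indicator (hs j), gaussianReal_apply 0 one_ne_zero]

lemma map_withDensity_comp {α β : Type*} [MeasurableSpace α] [MeasurableSpace β]
    (μ : Measure α) {φ : α → β} (hφ : Measurable φ) {g : β → ℝ≥0∞} (hg : Measurable g) :
    (μ.withDensity (fun x => g (φ x))).map φ = (μ.map φ).withDensity g := by
  ext s hs
  rw [Measure.map_apply hφ hs, withDensity_apply _ hs, withDensity_apply _ (hφ hs),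
    setLIntegral_map hs hg hφ]

lemma measurable_mulVec {d : ℕ} (M : Matrix (Fin d) (Fin d) ℝ) :
    Measurable (fun z : Fin d → ℝ => M.mulVec z) :=
  measurable_pi_lambda _ fun i => by
    simpa [Matrix.mulVec, dotProduct] using
      Finset.measurable_sum Finset.univ fun j _ =>
        (by fun_prop : Measurable fun c : Fin d → ℝ => M i j * c j)

lemma sum_sq_mulVec {d : ℕ} (M : Matrix (Fin d) (Fin d) ℝ) (hM : Mᵀ * M = 1)
    (z : Fin d → ℝ) : ∑ j, (M.mulVec z j) ^ 2 = ∑ j, (z j) ^ 2 := by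
  have h1 : M.mulVec z ⬝ᵥ M.mulVec z = z ⬝ᵥ z := by
    rw [dotProduct_mulVec, ← Matrix.vecMul_transpose M z, Matrix.vecMul_vecMul, hM,
      Matrix.vecMul_one]
  simpa [dotProduct, pow_two] using h1

lemma map_orth {d : ℕ} (M : Matrix (Fin d) (Fin d) ℝ) (hM : Mᵀ * M = 1) :
    (Measure.pi fun _ : Fin d => gaussianReal 0 1).map M.mulVec
      = Measure.pi fun _ : Fin d => gaussianReal 0 1 := by
  have hdet2 : M.det * M.det = 1 := by
    have h := congrArg Matrix.det hM
    rwa [Matrix.det_mul, Matrix.det_transpose, Matrix.det_one] at h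
  have hdet0 : M.det ≠ 0 := fun h => by simp [h] at hdet2
  have habs : |M.det⁻¹| = 1 := by
    rcases mul_self_eq_one_iff.1 hdet2 with h | h <;> rw [h] <;> norm_num
  have hvol : (volume : Measure (Fin d → ℝ)).map M.mulVec = volume := by
    have h := Real.map_matrix_volume_pi_eq_smul_volume_pi (M := M) hdet0
    have hfun : ⇑(Matrix.toLin' M) = M.mulVec := funext fun v => Matrix.toLin'_apply M v
    rwa [hfun, habs, ENNReal.ofReal_one, one_smul] at h
  set G : (Fin d → ℝ) → ℝ≥0∞ := fun z =>
    ENNReal.ofReal ((Real.sqrt (2 * Real.pi))⁻¹ ^ d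
      * Real.exp ((-1/2) * ∑ j, (z j)^2)) with hG
  have hGmeas : Measurable G := by
    apply ENNReal.measurable_ofReal.comp
    apply Measurable.const_mul
    apply Real.measurable_exp.comp
    apply Measurable.const_mul
    exact Finset.measurable_sum _ fun j _ => (measurable_pi_apply j).pow_const 2
  have hprod : (fun z : Fin d → ℝ => ∏ j, gaussianPDF 0 1 (z j)) = G := by
    funext z
    simp only [hG, gaussianPDF]
    rw [← ENNReal.ofReal_prod_of_nonneg (fun j _ => gaussianPDFReal_nonneg 0 1 (z j))]
    congr 1
    simp only [gaussianPDFReal]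
    rw [Finset.prod_mul_distrib, Finset.prod_const, Finset.card_univ, Fintype.card_fin,
      ← Real.exp_sum]
    have h1 : ((√(2 * Real.pi * ((1:ℝ≥0):ℝ)))⁻¹ : ℝ) = (√(2 * Real.pi))⁻¹ := by norm_num
    have h2 : ∀ j, -(z j - 0)^2/(2*((1:ℝ≥0):ℝ)) = (-1/2) * (z j)^2 := fun j => by
      push_cast; ring
    simp_rw [h1, h2]
    rw [← Finset.mul_sum]
  have hGM : (fun z : Fin d → ℝ => G (M.mulVec z)) = G := by
    funext z
    simp only [hG]
    rw [sum_sq_mulVec M hM z]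
  rw [pi_gaussian_eq_withDensity d, hprod]
  calc ((volume : Measure (Fin d → ℝ)).withDensity G).map M.mulVec
      = ((volume : Measure (Fin d → ℝ)).withDensity
          (fun z => G (M.mulVec z))).map M.mulVec := by rw [hGM]
    _ = ((volume : Measure (Fin d → ℝ)).map M.mulVec).withDensity G :=
        map_withDensity_comp volume (measurable_mulVec M) hGmeas
    _ = (volume : Measure (Fin d → ℝ)).withDensity G := by rw [hvol]

lemma pi_map_eval {ι : Type*} [Fintype ι] [DecidableEq ι] (μ : ι → Measure ℝ)
    [∀ i, IsProbabilityMeasure (μ i)] (j : ι) :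
    (Measure.pi μ).map (fun z => z j) = μ j := by
  ext s hs
  rw [Measure.map_apply (measurable_pi_apply j) hs]
  have h : (fun z : ι → ℝ => z j) ⁻¹' s
      = Set.univ.pi (Function.update (fun _ => Set.univ) j s) := Set.eval_preimage
  rw [h, Measure.pi_pi]
  rw [Fintype.prod_eq_single j (fun i hi => by
    rw [Function.update_of_ne hi]; exact measure_univ)]
  rw [Function.update_self]

lemma cond_map {α : Type*} [MeasurableSpace α] (μ : Measure α) {φ : α → α}
    (hφ : Measurable φ) (hinv : μ.map φ = μ) {T : Set α} (hT : MeasurableSet T) :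
    μ[|T] = (μ[|φ ⁻¹' T]).map φ := by
  have hS : μ (φ ⁻¹' T) = μ T := by rw [← Measure.map_apply hφ hT, hinv]
  show (μ T)⁻¹ • μ.restrict T = ((μ (φ ⁻¹' T))⁻¹ • μ.restrict (φ ⁻¹' T)).map φ
  rw [Measure.map_smul, ← Measure.restrict_map hφ hT, hinv, hS]

instance gaussianReal_isOpenPosMeasure :
    (gaussianReal 0 1).IsOpenPosMeasure := by
  constructor
  intro U hU hne h0
  have h1 : (volume : Measure ℝ) U = 0 :=
    (gaussianReal_absolutelyContinuous' 0 one_ne_zero) h0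
  exact hU.measure_ne_zero volume hne h1

lemma integrable_sq_gaussian : Integrable (fun x : ℝ => x ^ 2) (gaussianReal 0 1) := by
  rw [gaussianReal_of_var_ne_zero 0 one_ne_zero,
    integrable_withDensity_iff (measurable_gaussianPDF 0 1)
      (ae_of_all _ fun x => ENNReal.ofReal_lt_top)]
  have key : Integrable (fun x : ℝ =>
      ((√(2 * Real.pi * ((1:ℝ≥0):ℝ)))⁻¹) * (x ^ (2:ℝ) * Real.exp (-(1/2) * x ^ 2)))
      volume :=
    (integrable_rpow_mul_exp_neg_mul_sq (by norm_num) (by norm_num)).const_mul _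
  refine key.congr (ae_of_all _ fun x => ?_)
  have ht : (gaussianPDF 0 1 x).toReal = gaussianPDFReal 0 1 x :=
    ENNReal.toReal_ofReal (gaussianPDFReal_nonneg 0 1 x)
  simp only []
  rw [ht]
  simp only [gaussianPDFReal]
  have hx2 : (x:ℝ) ^ (2:ℝ) = x ^ (2:ℕ) := by
    rw [show ((2:ℝ) = ((2:ℕ):ℝ)) by norm_num, Real.rpow_natCast]
  have harg : -(x-0)^2/(2*((1:ℝ≥0):ℝ)) = -(1/2)*x^2 := by push_cast; ring
  rw [hx2, harg]
  ring

lemma vec_quad {d : ℕ} (Mat B : Matrix (Fin d) (Fin d) ℝ) (z : Fin d → ℝ) :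
    (B.mulVec z) ⬝ᵥ Mat.mulVec (B.mulVec z) = z ⬝ᵥ (Bᵀ * Mat * B).mulVec z := by
  rw [Matrix.mulVec_mulVec, dotProduct_mulVec, ← Matrix.vecMul_transpose B z,
    Matrix.vecMul_vecMul, ← dotProduct_mulVec, ← Matrix.mul_assoc]

lemma diag_quad {d : ℕ} (η : Fin d → ℝ) (z : Fin d → ℝ) :
    z ⬝ᵥ (diagonal η).mulVec z = ∑ k, η k * (z k) ^ 2 := by
  simp only [dotProduct, Matrix.mulVec_diagonal]
  exact Finset.sum_congr rfl fun m _ => by ring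

end QFRaux

open QFRaux

/-- Theorem 1 (covariance under Quadratic Form Rerandomization, Gaussian limit form):
if `Z ~ N(0, Σ)`, the covariance matrix of `Z` conditional on the balance event
`ZᵀAZ ≤ a` equals `Σ^{1/2} Ω diag(ν) Ωᵀ Σ^{1/2}`, where
`ν j = E[Z_j² | ∑ k η_k Z_k² ≤ a]` for i.i.d. standard normals and `η` are the
eigenvalues of `Σ^{1/2} A Σ^{1/2}` with orthogonal eigenvector matrix `Ω`. -/
theorem covariance_quadratic_form_rerandomization (d : ℕ) (hd : 1 ≤ d)
    (Sig Sh A Om : Matrix (Fin d) (Fin d) ℝ)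
    (hSig : Sig.PosDef) (hSh : Sh.PosSemidef) (hsq : Sh * Sh = Sig)
    (hA : A.PosSemidef)
    (hOm : Omᵀ * Om = 1)
    (η : Fin d → ℝ) (hη : ∀ j, 0 ≤ η j)
    (hdiag : Omᵀ * (Sh * A * Sh) * Om = diagonal η)
    (a : ℝ) (ha : 0 < a)
    (μ : Measure (Fin d → ℝ))
    (hμ : μ = Measure.pi fun _ : Fin d => gaussianReal 0 1)
    (T : Set (Fin d → ℝ))
    (hT : T = {w | (Sh.mulVec w) ⬝ᵥ (A.mulVec (Sh.mulVec w)) ≤ a})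
    (ν : Fin d → ℝ)
    (hν : ∀ j, ν j = ∫ z, (z j) ^ 2 ∂(μ[|{z | ∑ k, η k * (z k) ^ 2 ≤ a}]))
    (i k : Fin d) :
    ∫ w, (Sh.mulVec w) i * (Sh.mulVec w) k ∂(μ[|T])
      = (Sh * Om * diagonal ν * Omᵀ * Sh) i k := by
  classical
  subst hμ
  subst hT
  set μ : Measure (Fin d → ℝ) := Measure.pi fun _ : Fin d => gaussianReal 0 1 with hμdef
  set S : Set (Fin d → ℝ) := {z | ∑ k, η k * (z k) ^ 2 ≤ a} with hSdef
  set T : Set (Fin d → ℝ) := {w | (Sh.mulVec w) ⬝ᵥ (A.mulVec (Sh.mulVec w)) ≤ a} with hTdef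
  set B : Matrix (Fin d) (Fin d) ℝ := Sh * Om with hBdef
  -- symmetry of Sh
  have hShT : Shᵀ = Sh := by
    have h : Shᴴ = Sh := hSh.1
    rwa [Matrix.conjTranspose_eq_transpose_of_trivial] at h
  have hBtAB : Bᵀ * A * B = diagonal η := by
    rw [hBdef, Matrix.transpose_mul, hShT]
    calc Omᵀ * Sh * A * (Sh * Om) = Omᵀ * (Sh * A * Sh) * Om := by
          simp only [Matrix.mul_assoc]
      _ = diagonal η := hdiag
  have hquad : ∀ z : Fin d → ℝ,
      (Sh.mulVec (Om.mulVec z)) ⬝ᵥ A.mulVec (Sh.mulVec (Om.mulVec z))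
        = ∑ m, η m * (z m) ^ 2 := by
    intro z
    rw [Matrix.mulVec_mulVec, ← hBdef, vec_quad, hBtAB, diag_quad]
  -- measurability
  have hSmeas : MeasurableSet S :=
    measurableSet_le (Finset.measurable_sum _ fun m _ =>
      (by fun_prop)) measurable_const
  have hTmeas : MeasurableSet T := by
    rw [hTdef]
    simp_rw [Matrix.mulVec_mulVec]
    refine measurableSet_le ?_ measurable_const
    refine Finset.measurable_sum _ fun m _ => Measurable.mul ?_ ?_
    · exact (measurable_pi_apply m).comp (measurable_mulVec Sh)
    · exact (measurable_pi_apply m).comp (measurable_mulVec (A * Sh))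
  -- preimage of T under Om
  have hpre : Om.mulVec ⁻¹' T = S := by
    ext z
    simp only [Set.mem_preimage, hTdef, hSdef, Set.mem_setOf_eq, hquad z]
  have hmapOm : μ.map Om.mulVec = μ := map_orth Om hOm
  have hcondT : μ[|T] = (μ[|S]).map Om.mulVec := by
    have h := cond_map μ (measurable_mulVec Om) hmapOm hTmeas
    rwa [hpre] at h
  have hfmeas : Measurable fun w : Fin d → ℝ => (Sh.mulVec w) i * (Sh.mulVec w) k :=
    ((measurable_pi_apply i).comp (measurable_mulVec Sh)).mul
      ((measurable_pi_apply k).comp (measurable_mulVec Sh))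
  rw [hcondT, integral_map (measurable_mulVec Om).aemeasurable hfmeas.aestronglyMeasurable]
  -- positivity of μ S
  have hμS0 : μ S ≠ 0 := by
    have hUopen : IsOpen {z : Fin d → ℝ | ∑ m, η m * (z m) ^ 2 < a} :=
      isOpen_lt (continuous_finset_sum _ fun m _ =>
        continuous_const.mul ((continuous_apply m).pow 2)) continuous_const
    have h0 : (0 : Fin d → ℝ) ∈ {z : Fin d → ℝ | ∑ m, η m * (z m) ^ 2 < a} := by
      simp [ha]
    have hU0 : μ {z : Fin d → ℝ | ∑ m, η m * (z m) ^ 2 < a} ≠ 0 :=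
      hUopen.measure_ne_zero μ ⟨0, h0⟩
    intro h
    have hsub : {z : Fin d → ℝ | ∑ m, η m * (z m) ^ 2 < a} ⊆ S := fun z hz => by
      simp only [hSdef, Set.mem_setOf_eq] at *
      exact le_of_lt hz
    exact hU0 (measure_mono_null hsub h)
  -- integrability
  have hint2 : ∀ j : Fin d, Integrable (fun z : Fin d → ℝ => (z j) ^ 2) μ := by
    intro j
    have hmap := pi_map_eval (fun _ : Fin d => gaussianReal 0 1) j
    have h := integrable_sq_gaussian
    rw [← hmap] at h
    exact (integrable_map_measure
      ((measurable_id.pow_const 2).aestronglyMeasurable)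
      (measurable_pi_apply j).aemeasurable).mp h
  have hintS : ∀ j l : Fin d, Integrable (fun z : Fin d → ℝ => z j * z l) (μ[|S]) := by
    intro j l
    have hμint : Integrable (fun z : Fin d → ℝ => z j * z l) μ := by
      refine ((hint2 j).add (hint2 l)).mono'
        ((measurable_pi_apply j).mul (measurable_pi_apply l)).aestronglyMeasurable
        (ae_of_all _ fun z => ?_)
      have hb : |z j * z l| ≤ z j ^ 2 + z l ^ 2 := by
        rw [abs_mul]
        nlinarith [sq_nonneg (|z j| - |z l|), sq_abs (z j), sq_abs (z l),
          abs_nonneg (z j), abs_nonneg (z l)]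
      simpa [Real.norm_eq_abs, abs_mul] using hb
    exact (hμint.restrict).smul_measure (ENNReal.inv_ne_top.mpr hμS0)
  -- covariance under the symmetric conditional measure
  have hcov : ∀ j l : Fin d, ∫ z, z j * z l ∂(μ[|S]) = if j = l then ν j else 0 := by
    intro j l
    by_cases hjl : j = l
    · subst hjl
      rw [if_pos rfl, hν j]
      simp only [pow_two]
    · rw [if_neg hjl]
      set D : Matrix (Fin d) (Fin d) ℝ :=
        diagonal (fun m : Fin d => if m = j then (-1 : ℝ) else 1) with hD
      have hDorth : Dᵀ * D = 1 := by
        rw [hD, Matrix.diagonal_transpose, Matrix.diagonal_mul_diagonal]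
        rw [show (fun m : Fin d => (if m = j then (-1 : ℝ) else 1)
            * (if m = j then (-1 : ℝ) else 1)) = fun _ => (1 : ℝ) from
          funext fun m => by split <;> norm_num]
        exact Matrix.diagonal_one
      have hmapD : μ.map D.mulVec = μ := map_orth D hDorth
      have hpreD : D.mulVec ⁻¹' S = S := by
        ext z
        simp only [Set.mem_preimage, hSdef, Set.mem_setOf_eq]
        have hsq2 : ∀ m, (D.mulVec z m) ^ 2 = (z m) ^ 2 := fun m => by
          rw [hD, Matrix.mulVec_diagonal]; split <;> ring
        rw [show ∑ m, η m * (D.mulVec z m) ^ 2 = ∑ m, η m * (z m) ^ 2 from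
          Finset.sum_congr rfl fun m _ => by rw [hsq2 m]]
      have hcondD : μ[|S] = (μ[|S]).map D.mulVec := by
        have h := cond_map μ (measurable_mulVec D) hmapD hSmeas
        rwa [hpreD] at h
      have hmeasjl : Measurable fun z : Fin d → ℝ => z j * z l :=
        (measurable_pi_apply j).mul (measurable_pi_apply l)
      have h2 : ∀ z : Fin d → ℝ, (D.mulVec z) j * (D.mulVec z) l = -(z j * z l) := by
        intro z
        rw [hD, Matrix.mulVec_diagonal, Matrix.mulVec_diagonal, if_pos rfl,
          if_neg (fun h => hjl h.symm)]
        ring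
      have hI : ∫ z, z j * z l ∂(μ[|S]) = - ∫ z, z j * z l ∂(μ[|S]) := by
        conv_lhs => rw [hcondD,
          integral_map (measurable_mulVec D).aemeasurable hmeasjl.aestronglyMeasurable]
        simp_rw [h2]
        rw [integral_neg]
      linarith
  -- expansion
  have hexpand : ∀ z : Fin d → ℝ,
      (Sh.mulVec (Om.mulVec z)) i * (Sh.mulVec (Om.mulVec z)) k
        = ∑ j, ∑ l, (B i j * B k l) * (z j * z l) := by
    intro z
    rw [Matrix.mulVec_mulVec, ← hBdef]
    show (∑ j, B i j * z j) * (∑ l, B k l * z l) = _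
    rw [Finset.sum_mul_sum]
    exact Finset.sum_congr rfl fun j _ => Finset.sum_congr rfl fun l _ => by ring
  calc ∫ z, (Sh.mulVec (Om.mulVec z)) i * (Sh.mulVec (Om.mulVec z)) k ∂(μ[|S])
      = ∫ z, ∑ j, ∑ l, (B i j * B k l) * (z j * z l) ∂(μ[|S]) :=
        integral_congr_ae (ae_of_all _ fun z => hexpand z)
    _ = ∑ j, ∑ l, (B i j * B k l) * ∫ z, z j * z l ∂(μ[|S]) := by
        rw [integral_finset_sum _ (fun j _ => integrable_finset_sum _
          (fun l _ => ((hintS j l).const_mul _)))]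
        refine Finset.sum_congr rfl fun j _ => ?_
        rw [integral_finset_sum _ (fun l _ => (hintS j l).const_mul _)]
        exact Finset.sum_congr rfl fun l _ => integral_const_mul _ _
    _ = ∑ j, B i j * ν j * B k j := by
        refine Finset.sum_congr rfl fun j _ => ?_
        simp only [hcov, mul_ite, mul_zero, Finset.sum_ite_eq, Finset.mem_univ, if_true]
        ring
    _ = (Sh * Om * diagonal ν * Omᵀ * Sh) i k := by
        rw [show Sh * Om * diagonal ν * Omᵀ * Sh = B * diagonal ν * Bᵀ from by
          rw [hBdef, Matrix.transpose_mul, hShT]; simp only [Matrix.mul_assoc]]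
        rw [Matrix.mul_apply]
        exact Finset.sum_congr rfl fun j _ => by
          rw [Matrix.mul_diagonal, Matrix.transpose_apply]
end

section
/- Trace AM–GM inequality for products of positive-definite matrices (the key inequality in the proofs of Theorems 2 and 3): if B and C are d × d real symmetric positive-definite matrices with d ≥ 1, then Matrix.trace (B * C) ≥ d * (Matrix.det B * Matrix.det C) ^ ((1 : ℝ)/d). (The eigenvalues of B*C are real and positive, so their arithmetic mean dominates their geometric mean, which equals (det B · det C)^{1/d}.) -/
/-!
Write `B = Xᴴ X` with `X` invertible. Then `tr (B C) = tr (X C Xᴴ)` and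
`det (X C Xᴴ) = det B · det C`, where `X C Xᴴ` is positive definite; the inequality is
AM–GM for the (positive) eigenvalues of `X C Xᴴ`, whose sum is the trace and whose product is
the determinant.
-/

namespace Matrix

variable {n : Type*} [Fintype n] [DecidableEq n]

theorem PosDef.card_mul_det_rpow_le_trace {A : Matrix n n ℝ} (hA : A.PosDef) :
    Fintype.card n * A.det ^ ((1 : ℝ) / Fintype.card n) ≤ A.trace := by
  rcases isEmpty_or_nonempty n with hn | hn
  · simp
  have hcard : (0 : ℝ) < Fintype.card n := mod_cast Fintype.card_pos
  have amgm := Real.geom_mean_le_arith_mean Finset.univ (fun _ ↦ 1) hA.isHermitian.eigenvalues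
    (fun _ _ ↦ zero_le_one) (by simpa using hcard) (fun i _ ↦ (hA.eigenvalues_pos i).le)
  simp only [Real.rpow_one, one_mul, Finset.sum_const, Finset.card_univ, nsmul_eq_mul,
    mul_one, ← one_div] at amgm
  rw [hA.isHermitian.det_eq_prod_eigenvalues, hA.isHermitian.trace_eq_sum_eigenvalues]
  simpa only [RCLike.ofReal_real_eq_id, id_eq, le_div_iff₀' hcard] using amgm

open scoped ComplexOrder MatrixOrder in
theorem PosDef.exists_isUnit_eq_conjTranspose_mul_self {𝕜 : Type*} [RCLike 𝕜]
    {A : Matrix n n 𝕜} (hA : A.PosDef) : ∃ X : Matrix n n 𝕜, IsUnit X ∧ A = Xᴴ * X :=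
  CStarAlgebra.isStrictlyPositive_iff_eq_star_mul_self.mp hA.isStrictlyPositive

theorem PosDef.card_mul_det_mul_rpow_le_trace_mul {B C : Matrix n n ℝ} (hB : B.PosDef)
    (hC : C.PosDef) :
    Fintype.card n * (B.det * C.det) ^ ((1 : ℝ) / Fintype.card n) ≤ (B * C).trace := by
  obtain ⟨X, hX, rfl⟩ := hB.exists_isUnit_eq_conjTranspose_mul_self
  have hXCX : (X * C * Xᴴ).PosDef :=
    hC.mul_mul_conjTranspose_same (vecMul_injective_of_isUnit hX)
  have htrace : (Xᴴ * X * C).trace = (X * C * Xᴴ).trace := by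
    rw [mul_assoc, trace_mul_comm, mul_assoc]
  have hdet : (Xᴴ * X).det * C.det = (X * C * Xᴴ).det := by
    simp only [det_mul]
    ring
  rw [htrace, hdet]
  exact hXCX.card_mul_det_rpow_le_trace

end Matrix

open Matrix

theorem trace_amgm_posdef_general (d : ℕ)
    (B C : Matrix (Fin d) (Fin d) ℝ)
    (hB : B.PosDef) (hC : C.PosDef) :
    Matrix.trace (B * C) ≥ (d : ℝ) * (Matrix.det B * Matrix.det C) ^ ((1 : ℝ) / d) := by
  simpa using hB.card_mul_det_mul_rpow_le_trace_mul hC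

/-- Trace AM–GM inequality for products of positive-definite matrices:
`tr(BC) ≥ d (det B · det C)^{1/d}`. -/
theorem trace_amgm_posdef (d : ℕ) (hd : 1 ≤ d)
    (B C : Matrix (Fin d) (Fin d) ℝ)
    (hB : B.PosDef) (hC : C.PosDef) :
    Matrix.trace (B * C) ≥ (d : ℝ) * (Matrix.det B * Matrix.det C) ^ ((1 : ℝ) / d) :=
  trace_amgm_posdef_general d B C hB hC
end

section
/- Theorem 4, algebraic core (difference in variances of the difference-in-means estimator): let M be a d × d real symmetric matrix, Ω a d × d real orthogonal matrix, ν : Fin d → ℝ with ν_j ≤ 1 for all j, and β : Fin d → ℝ. Then β ⬝ᵥ ((M * M).mulVec β) − β ⬝ᵥ ((M * Ω * diagonal ν * Ωᵀ * M).mulVec β) = ∑_j ((Ωᵀ.mulVec (M.mulVec β))_j)^2 * (1 − ν_j), and this quantity is ≥ 0. Taking M = Σ^{1/2}, this says βᵀΣβ − βᵀ Σ^{1/2} Ω diag(ν) Ωᵀ Σ^{1/2} β = ∑_j ((Ωᵀ Σ^{1/2} β)_j)² (1 − ν_j) ≥ 0, so Quadratic Form Rerandomization never increases the asymptotic variance of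 the difference-in-means estimator. -/
open Matrix

/-- Theorem 4, algebraic core: the reduction in the variance of the difference-in-means
estimator equals `∑_j ((Ωᵀ M β)_j)² (1 − ν_j)`, which is nonnegative when all `ν_j ≤ 1`. -/
theorem variance_reduction_difference (d : ℕ)
    (M Om : Matrix (Fin d) (Fin d) ℝ)
    (hM : M.IsSymm) (hOm : Omᵀ * Om = 1) (hOm' : Om * Omᵀ = 1)
    (ν : Fin d → ℝ) (hν : ∀ j, ν j ≤ 1)
    (β : Fin d → ℝ) :
    β ⬝ᵥ ((M * M).mulVec β) - β ⬝ᵥ ((M * Om * diagonal ν * Omᵀ * M).mulVec β)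
        = ∑ j, ((Omᵀ.mulVec (M.mulVec β)) j) ^ 2 * (1 - ν j)
      ∧ 0 ≤ ∑ j, ((Omᵀ.mulVec (M.mulVec β)) j) ^ 2 * (1 - ν j) := by
  have hβM : vecMul β M = M.mulVec β := by
    rw [← mulVec_transpose, hM.eq]
  have h1 : β ⬝ᵥ (M * M).mulVec β
      = (Omᵀ.mulVec (M.mulVec β)) ⬝ᵥ (Omᵀ.mulVec (M.mulVec β)) := by
    rw [dotProduct_mulVec (v := Omᵀ.mulVec (M.mulVec β)), vecMul_transpose,
      mulVec_mulVec, hOm', one_mulVec, ← mulVec_mulVec, dotProduct_mulVec, hβM]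
  have h3 : β ⬝ᵥ (M * Om * diagonal ν * Omᵀ * M).mulVec β
      = (Omᵀ.mulVec (M.mulVec β)) ⬝ᵥ (diagonal ν).mulVec (Omᵀ.mulVec (M.mulVec β)) := by
    rw [show M * Om * diagonal ν * Omᵀ * M = M * (Om * (diagonal ν * (Omᵀ * M))) by
        simp [Matrix.mul_assoc],
      ← mulVec_mulVec, dotProduct_mulVec, hβM, ← mulVec_mulVec,
      dotProduct_mulVec (v := M.mulVec β), ← mulVec_transpose, mulVec_mulVec]
    simp [← Matrix.mulVec_mulVec]
  refine ⟨?_, Finset.sum_nonneg fun j _ =>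
    mul_nonneg (sq_nonneg _) (by linarith [hν j])⟩
  rw [h1, h3]
  simp only [dotProduct, mulVec_diagonal, ← Finset.sum_sub_distrib]
  exact Finset.sum_congr rfl fun j _ => by ring
end
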